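/- arXiv:2212.07987 — 3 statements merged into one kernel-verified Lean document; each statement's English description precedes it below -/
import Mathlib

section
/- Let ρ be a two-qubit density matrix equal either to the Bell state |Φ⟩⟨Φ| or to σ₂, and let E_γ(ρ) = (1−γ)ρ + (γ/4)·I₄ be the two-qubit depolarizing channel of strength γ ∈ [0,1). Then among all measurements of the form {Π^{(1)}_{a} ⊗ Π^{(2)}_{b}} with {Π^{(1)}_a} and {Π^{(2)}_b} PVMs on the first and second qubit respectively, the computational-basis measurement on both qubits maximizes the mutual information H(P₁) + H(P₂) − H(P₁₂) of the outcome distribution P₁₂(a,b) = tr((Π^{(1)}_a ⊗ Π^{(2)}_b) E_γ(ρ)). -/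
open scoped Kronecker Matrix Classical

noncomputable section

/-- Base-2 Shannon entropy of a finitely supported distribution. -/
def shannon {α : Type*} [Fintype α] (p : α → ℝ) : ℝ :=
  -∑ x, p x * Real.logb 2 (p x)

/-- Base-2 von Neumann entropy of a matrix (junk value `0` if not Hermitian),
computed from the eigenvalues. -/
def vnEntropy {d : Type*} [Fintype d] [DecidableEq d] (ρ : Matrix d d ℂ) : ℝ :=
  if h : ρ.IsHermitian then -∑ k, h.eigenvalues k * Real.logb 2 (h.eigenvalues k) else 0

/-- A projection-valued measure on a finite-dimensional space: a finite family of
mutually orthogonal self-adjoint projections summing to the identity. -/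
structure PVM (ι : Type*) (d : Type*) [Fintype d] [DecidableEq d] where
  [fintype : Fintype ι]
  proj : ι → Matrix d d ℂ
  herm : ∀ a, (proj a).IsHermitian
  idem : ∀ a, proj a * proj a = proj a
  orthogonal : ∀ a b, a ≠ b → proj a * proj b = 0
  complete : ∑ a, proj a = 1

/-- Outcome distribution of a PVM measurement on a state. -/
def pvmProb {ι d : Type*} [Fintype d] [DecidableEq d] (P : PVM ι d)
    (ρ : Matrix d d ℂ) : ι → ℝ :=
  fun a => ((P.proj a * ρ).trace).re

/-- Shannon entropy of the outcome distribution of a PVM measurement. -/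
def pvmEntropy {ι d : Type*} [Fintype d] [DecidableEq d] (P : PVM ι d)
    (ρ : Matrix d d ℂ) : ℝ :=
  letI := P.fintype
  shannon (pvmProb P ρ)

/-- Joint outcome distribution of a product of two local PVMs on a bipartite state. -/
def jointProb {ιA ιB dA dB : Type*} [Fintype dA] [DecidableEq dA] [Fintype dB]
    [DecidableEq dB] (P : PVM ιA dA) (Q : PVM ιB dB)
    (ρ : Matrix (dA × dB) (dA × dB) ℂ) : ιA × ιB → ℝ :=
  fun ab => (((P.proj ab.1 ⊗ₖ Q.proj ab.2) * ρ).trace).re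

/-- Shannon entropy of the joint outcome distribution of a product of two local PVMs. -/
def jointEntropy {ιA ιB dA dB : Type*} [Fintype dA] [DecidableEq dA] [Fintype dB]
    [DecidableEq dB] (P : PVM ιA dA) (Q : PVM ιB dB)
    (ρ : Matrix (dA × dB) (dA × dB) ℂ) : ℝ :=
  letI := P.fintype; letI := Q.fintype
  shannon (jointProb P Q ρ)

/-- Mutual information `H(P_A) + H(P_B) - H(P_{AB})` of the joint outcome distribution
of a product of two local PVMs on a bipartite state. -/
def miOf {ιA ιB dA dB : Type*} [Fintype dA] [DecidableEq dA] [Fintype dB]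
    [DecidableEq dB] (P : PVM ιA dA) (Q : PVM ιB dB)
    (ρ : Matrix (dA × dB) (dA × dB) ℂ) : ℝ :=
  letI := P.fintype; letI := Q.fintype
  shannon (fun a : ιA => ∑ b : ιB, jointProb P Q ρ (a, b)) +
    shannon (fun b : ιB => ∑ a : ιA, jointProb P Q ρ (a, b)) -
    shannon (jointProb P Q ρ)

/-- Measured mutual information: the supremum of `miOf` over all pairs of local PVMs. -/
def measuredMI {dA dB : Type*} [Fintype dA] [DecidableEq dA] [Fintype dB] [DecidableEq dB]
    (ρ : Matrix (dA × dB) (dA × dB) ℂ) : ℝ :=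
  sSup { r : ℝ | ∃ (ιA ιB : Type) (P : PVM ιA dA) (Q : PVM ιB dB), r = miOf P Q ρ }

/-- The computational-basis PVM. -/
def compPVM (d : Type*) [Fintype d] [DecidableEq d] : PVM d d where
  proj x := Matrix.diagonal (fun y => if y = x then (1 : ℂ) else 0)
  herm x := by
    refine Matrix.isHermitian_diagonal_of_self_adjoint _ ?_
    funext y
    by_cases h : y = x <;> simp [h]
  idem x := by
    rw [Matrix.diagonal_mul_diagonal]
    ext y z
    by_cases h : y = z
    · subst h
      by_cases h2 : y = x <;> simp [Matrix.diagonal_apply, h2]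
    · simp [Matrix.diagonal_apply, h]
  orthogonal a b hab := by
    rw [Matrix.diagonal_mul_diagonal]
    have h0 : (fun y => (if y = a then (1:ℂ) else 0) * (if y = b then (1:ℂ) else 0))
        = fun _ => (0:ℂ) := by
      funext y
      by_cases h : y = a <;> by_cases h' : y = b <;> simp_all
    rw [h0, Matrix.diagonal_zero]
  complete := by
    ext y z
    rw [Matrix.sum_apply]
    by_cases h : y = z
    · subst h
      simp [Matrix.diagonal_apply, Matrix.one_apply]
    · simp [Matrix.diagonal_apply, Matrix.one_apply, h]

/-- Amplitudes of the two-qubit Bell state `|Φ⟩ = (|00⟩ + |11⟩)/√2`. -/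
def bellVec : Fin 2 × Fin 2 → ℂ :=
  fun x => if x.1 = x.2 then ((Real.sqrt 2 : ℝ) : ℂ)⁻¹ else 0

/-- The two-qubit Bell state `|Φ⟩⟨Φ|`. -/
def bellState : Matrix (Fin 2 × Fin 2) (Fin 2 × Fin 2) ℂ :=
  Matrix.of fun x y => bellVec x * star (bellVec y)

/-- The two-qubit shared random bit `σ₂ = (|00⟩⟨00| + |11⟩⟨11|)/2`. -/
def sigma2 : Matrix (Fin 2 × Fin 2) (Fin 2 × Fin 2) ℂ :=
  Matrix.of fun x y => if x = y ∧ x.1 = x.2 then (1 : ℂ)/2 else 0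

/-- The two-qubit depolarizing channel `E_γ(ρ) = (1-γ)ρ + (γ/4)I₄`. -/
def depol2 (γ : ℝ) (ρ : Matrix (Fin 2 × Fin 2) (Fin 2 × Fin 2) ℂ) :
    Matrix (Fin 2 × Fin 2) (Fin 2 × Fin 2) ℂ :=
  (1 - (γ : ℂ)) • ρ + ((γ : ℂ)/4) • (1 : Matrix (Fin 2 × Fin 2) (Fin 2 × Fin 2) ℂ)

/-!
Both states, and hence their depolarizations, have maximally mixed marginals. A PVM on a qubit
either has a single nonzero projection, and then the mutual information vanishes, or it consists
of two rank-one projections padded with zeros. For two such local measurements the uniform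
marginals force the outcomes to be two uniform bits that agree with some probability `p`, so the
mutual information is `1 - h(p)` with `h` the binary entropy in bits. Positivity of the state puts
`p` in `[0, 1]` before and in `[γ/2, 1 - γ/2]` after depolarization; the computational basis
attains the endpoint `1 - γ/2`, and `h` is smallest at the endpoints of an interval symmetric
about `1/2`.
-/

open Finset Real Function
open scoped ComplexOrder

section Entropy

variable {α β α' β' : Type*} [Fintype α] [Fintype β] [Fintype α'] [Fintype β']

theorem shannon_eq_sum_negMulLog (f : α → ℝ) : shannon f = (∑ x, negMulLog (f x)) / log 2 := by
  simp only [shannon, negMulLog, logb, Finset.sum_div, ← Finset.sum_neg_distrib]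
  exact Finset.sum_congr rfl fun x _ => by ring

theorem shannon_comp_of_injective (f : β → ℝ) {e : α → β} (he : Injective e)
    (hf : ∀ b ∉ Set.range e, f b = 0) : shannon (f ∘ e) = shannon f := by
  simp only [shannon, comp_apply]
  rw [Fintype.sum_of_injective e he _ (fun b => f b * logb 2 (f b))
    (fun b hb => by simp [hf b hb]) fun _ => rfl]

def mutualInfo (T : α × β → ℝ) : ℝ :=
  shannon (fun a => ∑ b, T (a, b)) + shannon (fun b => ∑ a, T (a, b)) - shannon T

theorem mutualInfo_comp_prodMap (T : α × β → ℝ) {e₁ : α' → α} {e₂ : β' → β}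
    (he₁ : Injective e₁) (he₂ : Injective e₂)
    (hT : ∀ a b, a ∉ Set.range e₁ ∨ b ∉ Set.range e₂ → T (a, b) = 0) :
    mutualInfo (T ∘ Prod.map e₁ e₂) = mutualInfo T := by
  have hfst (a : α) : ∑ b', T (a, e₂ b') = ∑ b, T (a, b) :=
    Fintype.sum_of_injective e₂ he₂ _ _ (fun b hb => hT a b (Or.inr hb)) fun _ => rfl
  have hsnd (b : β) : ∑ a', T (e₁ a', b) = ∑ a, T (a, b) :=
    Fintype.sum_of_injective e₁ he₁ _ _ (fun a ha => hT a b (Or.inl ha)) fun _ => rfl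
  have hjoint : shannon (T ∘ Prod.map e₁ e₂) = shannon T := by
    refine shannon_comp_of_injective T (he₁.prodMap he₂) fun ⟨a, b⟩ hab => hT a b ?_
    by_contra! h
    obtain ⟨⟨a', rfl⟩, ⟨b', rfl⟩⟩ := h
    exact hab ⟨(a', b'), rfl⟩
  simp only [mutualInfo, comp_apply, Prod.map_apply, hfst, hsnd, hjoint]
  rw [← shannon_comp_of_injective (fun a => ∑ b, T (a, b)) he₁
      fun a ha => Finset.sum_eq_zero fun b _ => hT a b (Or.inl ha),
    ← shannon_comp_of_injective (fun b => ∑ a, T (a, b)) he₂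
      fun b hb => Finset.sum_eq_zero fun a _ => hT a b (Or.inr hb)]
  rfl

theorem mutualInfo_comp_swap (T : α × β → ℝ) : mutualInfo (T ∘ Prod.swap) = mutualInfo T := by
  have hjoint : shannon (T ∘ Prod.swap) = shannon T := by
    rw [shannon, shannon]
    exact congrArg Neg.neg (Fintype.sum_equiv (Equiv.prodComm β α) _ _ fun _ => rfl)
  rw [mutualInfo, mutualInfo, hjoint]
  simp only [comp_apply, Prod.swap_prod_mk]
  ring

theorem mutualInfo_eq_zero_of_forall_ne_fst (T : α × β → ℝ) (a : α)
    (hT : ∀ x b, x ≠ a → T (x, b) = 0) (hsum : ∑ x, T x = 1) : mutualInfo T = 0 := by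
  have hrow : ∑ b, T (a, b) = 1 := by
    rw [← hsum, Fintype.sum_prod_type,
      Fintype.sum_eq_single a fun x hx => Finset.sum_eq_zero fun b _ => hT x b hx]
  have hfst : shannon (fun x => ∑ b, T (x, b)) = 0 := by
    rw [shannon, neg_eq_zero]
    refine Finset.sum_eq_zero fun x _ => ?_
    rcases eq_or_ne x a with rfl | hx
    · rw [hrow, logb_one, mul_zero]
    · simp [hT x _ hx]
  have hsnd : (fun b => ∑ x, T (x, b)) = fun b => T (a, b) :=
    funext fun b => Fintype.sum_eq_single a fun x hx => hT x b hx
  have hjoint : shannon (fun b => T (a, b)) = shannon T :=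
    shannon_comp_of_injective T (e := fun b => (a, b)) (fun b b' h => (Prod.mk.inj h).2)
      fun ⟨x, b⟩ hxb => hT x b fun hx => hxb ⟨b, by rw [hx]⟩
  rw [mutualInfo, hfst, hsnd, hjoint, zero_add, sub_self]

theorem mutualInfo_eq_zero_of_forall_ne_snd (T : α × β → ℝ) (b : β)
    (hT : ∀ a y, y ≠ b → T (a, y) = 0) (hsum : ∑ x, T x = 1) : mutualInfo T = 0 := by
  rw [← mutualInfo_comp_swap]
  refine mutualInfo_eq_zero_of_forall_ne_fst _ b (fun y a hy => hT a y hy) ?_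
  rw [← hsum]
  exact Fintype.sum_equiv (Equiv.prodComm β α) _ _ fun _ => rfl

end Entropy

section BinarySymmetric

def binarySymmetric (p : ℝ) : Fin 2 × Fin 2 → ℝ :=
  fun ij => if ij.1 = ij.2 then p / 2 else (1 - p) / 2

theorem eq_binarySymmetric_of_marginals (T : Fin 2 × Fin 2 → ℝ)
    (hrow : ∀ i, ∑ j, T (i, j) = 1 / 2) (hcol : ∀ j, ∑ i, T (i, j) = 1 / 2) :
    T = binarySymmetric (T (0, 0) + T (1, 1)) := by
  have h0 := hrow 0; have h1 := hrow 1; have h0' := hcol 0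
  simp only [Fin.sum_univ_two] at h0 h1 h0'
  ext ⟨i, j⟩
  fin_cases i <;> fin_cases j <;>
    simp only [Fin.zero_eta, Fin.mk_one, Fin.isValue, binarySymmetric, zero_ne_one, one_ne_zero,
      ↓reduceIte] <;>
    linarith

theorem mutualInfo_binarySymmetric (p : ℝ) :
    mutualInfo (binarySymmetric p) = 1 - binEntropy p / log 2 := by
  have hlog : log 2 ≠ 0 := (log_pos one_lt_two).ne'
  have hhalf : negMulLog (1 / 2) = log 2 / 2 := by
    simp only [negMulLog, one_div, log_inv, mul_neg, neg_mul, neg_neg]; ring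
  have hdiv (x : ℝ) : negMulLog (x / 2) = negMulLog x / 2 + x * (log 2 / 2) := by
    rw [div_eq_mul_inv, negMulLog_mul, ← one_div, hhalf]; ring
  simp only [mutualInfo, shannon_eq_sum_negMulLog, Fintype.sum_prod_type, Fin.sum_univ_two,
    binarySymmetric, Fin.isValue, Fin.reduceEq, if_true, if_false, hdiv,
    binEntropy_eq_negMulLog_add_negMulLog_one_sub]
  rw [show p / 2 + (1 - p) / 2 = 1 / 2 by ring, show (1 - p) / 2 + p / 2 = 1 / 2 by ring, hhalf]
  field_simp
  ring

theorem binEntropy_le_of_mem_Icc {t p : ℝ} (ht : 0 ≤ t) (hp : p ∈ Set.Icc t (1 - t)) :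
    binEntropy t ≤ binEntropy p := by
  rcases le_total p 2⁻¹ with hp2 | hp2
  · exact binEntropy_strictMonoOn.monotoneOn ⟨ht, hp.1.trans hp2⟩ ⟨ht.trans hp.1, hp2⟩ hp.1
  · rw [← binEntropy_one_sub t]
    exact binEntropy_strictAntiOn.antitoneOn ⟨hp2, hp.2.trans (by linarith)⟩
      ⟨hp2.trans hp.2, by linarith⟩ hp.2

theorem mutualInfo_binarySymmetric_le {t p : ℝ} (ht : 0 ≤ t) (hp : p ∈ Set.Icc t (1 - t)) :
    mutualInfo (binarySymmetric p) ≤ mutualInfo (binarySymmetric (1 - t)) := by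
  simp only [mutualInfo_binarySymmetric, binEntropy_one_sub]
  gcongr
  exact binEntropy_le_of_mem_Icc ht hp

theorem mutualInfo_binarySymmetric_nonneg (p : ℝ) : 0 ≤ mutualInfo (binarySymmetric p) := by
  rw [mutualInfo_binarySymmetric, sub_nonneg, div_le_one (log_pos one_lt_two)]
  exact binEntropy_le_log_two

end BinarySymmetric

theorem Fintype.sum_eq_two_cases {ι : Type*} [Fintype ι] {f : ι → ℕ} (h : ∑ i, f i = 2) :
    (∃ a, ∀ b, b ≠ a → f b = 0) ∨
      ∃ a₀ a₁, a₀ ≠ a₁ ∧ f a₀ = 1 ∧ f a₁ = 1 ∧ ∀ b, b ≠ a₀ → b ≠ a₁ → f b = 0 := by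
  obtain ⟨a₀, -, ha₀⟩ := Finset.exists_ne_zero_of_sum_ne_zero (s := univ) (f := f) (by omega)
  have hsplit := Finset.add_sum_erase univ f (mem_univ a₀)
  by_cases hrest : ∑ b ∈ univ.erase a₀, f b = 0
  · exact .inl ⟨a₀, fun b hb => Finset.sum_eq_zero_iff.mp hrest b (mem_erase.mpr ⟨hb, mem_univ b⟩)⟩
  obtain ⟨a₁, ha₁mem, ha₁⟩ := Finset.exists_ne_zero_of_sum_ne_zero hrest
  have hsplit' := Finset.add_sum_erase _ f ha₁mem
  have hzero : ∑ b ∈ (univ.erase a₀).erase a₁, f b = 0 := by omega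
  refine .inr ⟨a₀, a₁, (ne_of_mem_erase ha₁mem).symm, by omega, by omega, fun b hb₀ hb₁ => ?_⟩
  exact Finset.sum_eq_zero_iff.mp hzero b (by simp [hb₀, hb₁])

theorem Matrix.trace_eq_finrank_range_of_isIdempotentElem {K n : Type*} [Field K] [Fintype n]
    [DecidableEq n] {M : Matrix n n K} (hM : IsIdempotentElem M) :
    M.trace = Module.finrank K (LinearMap.range M.toLin') := by
  have hM' : IsIdempotentElem M.toLin' := by
    rw [IsIdempotentElem, Module.End.mul_eq_comp, ← Matrix.toLin'_mul, hM.eq]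
  rw [← Matrix.trace_toLin'_eq, (LinearMap.IsIdempotentElem.isProj_range _ hM').trace]

theorem Matrix.re_trace_mul_nonneg_of_isIdempotentElem {n : Type*} [Fintype n] [DecidableEq n]
    {M ρ : Matrix n n ℂ} (hM : M.IsHermitian) (hMM : IsIdempotentElem M) (hρ : ρ.PosSemidef) :
    0 ≤ (M * ρ).trace.re := by
  have h : (M * ρ).trace = (Mᴴ * ρ * M).trace := by
    rw [hM.eq, Matrix.trace_mul_cycle, hMM.eq]
  rw [h]
  exact (Complex.le_def.mp (hρ.conjTranspose_mul_mul_same M).trace_nonneg).1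

theorem Matrix.kronecker_sum {ι l m n p : Type*} (s : Finset ι) (A : Matrix l m ℂ)
    (B : ι → Matrix n p ℂ) : A ⊗ₖ ∑ i ∈ s, B i = ∑ i ∈ s, A ⊗ₖ B i :=
  map_sum (Matrix.kroneckerBilinear (R := ℂ) A) B s

theorem Matrix.sum_kronecker {ι l m n p : Type*} (s : Finset ι) (A : ι → Matrix l m ℂ)
    (B : Matrix n p ℂ) : (∑ i ∈ s, A i) ⊗ₖ B = ∑ i ∈ s, A i ⊗ₖ B :=
  map_sum ((Matrix.kroneckerBilinear (R := ℂ)).flip B) A s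

namespace PVM

variable {ι ιA ιB d dA dB : Type*} [Fintype d] [DecidableEq d] [Fintype dA] [DecidableEq dA]
  [Fintype dB] [DecidableEq dB]

def IsBasisMeasurement (P : PVM ι d) (e : d → ι) : Prop :=
  Injective e ∧ (∀ i, (P.proj (e i)).trace = 1) ∧ ∀ a ∉ Set.range e, P.proj a = 0

theorem isBasisMeasurement_compPVM : (compPVM d).IsBasisMeasurement id := by
  refine ⟨injective_id, fun i => ?_, fun a ha => (ha ⟨a, rfl⟩).elim⟩
  simp [compPVM, Matrix.trace_diagonal]

theorem jointProb_compPVM (ρ : Matrix (dA × dB) (dA × dB) ℂ) (x : dA × dB) :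
    jointProb (compPVM dA) (compPVM dB) ρ x = (ρ x x).re := by
  simp [jointProb, compPVM, Matrix.trace, Matrix.mul_apply, Matrix.diagonal_apply,
    Fintype.sum_prod_type]

theorem qubit_cases (P : PVM ι (Fin 2)) :
    (∃ a, ∀ b, b ≠ a → P.proj b = 0) ∨ ∃ e, P.IsBasisMeasurement e := by
  let := P.fintype
  set r : ι → ℕ := fun a => Module.finrank ℂ (LinearMap.range (P.proj a).toLin')
  have htrace (a : ι) : (P.proj a).trace = r a :=
    Matrix.trace_eq_finrank_range_of_isIdempotentElem (P.idem a)
  have hzero (a : ι) (ha : r a = 0) : P.proj a = 0 := by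
    rw [← Matrix.toLin'.map_eq_zero_iff, ← LinearMap.range_eq_bot]
    exact Submodule.finrank_eq_zero.mp ha
  have hsum : ∑ a, r a = 2 := by
    have h := congrArg Matrix.trace P.complete
    rw [Matrix.trace_sum, Matrix.trace_one, Fintype.card_fin] at h
    simp only [htrace] at h
    exact_mod_cast h
  rcases Fintype.sum_eq_two_cases hsum with ⟨a, ha⟩ | ⟨a₀, a₁, hne, h₀, h₁, hrest⟩
  · exact .inl ⟨a, fun b hb => hzero b (ha b hb)⟩
  refine .inr ⟨![a₀, a₁], fun i j hij => ?_, fun i => ?_, fun a ha => hzero a (hrest a ?_ ?_)⟩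
  · fin_cases i <;> fin_cases j <;> simp_all
  · fin_cases i <;> simp [htrace, h₀, h₁]
  · rintro rfl; exact ha ⟨0, rfl⟩
  · rintro rfl; exact ha ⟨1, rfl⟩

variable (P : PVM ιA dA) (Q : PVM ιB dB) (ρ : Matrix (dA × dB) (dA × dB) ℂ)

theorem jointProb_eq_zero_of_proj_fst {a : ιA} (ha : P.proj a = 0) (b : ιB) :
    jointProb P Q ρ (a, b) = 0 := by
  simp [jointProb, ha]

theorem jointProb_eq_zero_of_proj_snd (a : ιA) {b : ιB} (hb : Q.proj b = 0) :
    jointProb P Q ρ (a, b) = 0 := by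
  simp [jointProb, hb]

theorem sum_jointProb_snd (a : ιA) :
    letI := Q.fintype
    ∑ b, jointProb P Q ρ (a, b) = ((P.proj a ⊗ₖ (1 : Matrix dB dB ℂ)) * ρ).trace.re := by
  simp only [jointProb, ← Complex.re_sum, ← Matrix.trace_sum, ← Finset.sum_mul,
    ← Matrix.kronecker_sum, Q.complete]

theorem sum_jointProb_fst (b : ιB) :
    letI := P.fintype
    ∑ a, jointProb P Q ρ (a, b) = (((1 : Matrix dA dA ℂ) ⊗ₖ Q.proj b) * ρ).trace.re := by
  simp only [jointProb, ← Complex.re_sum, ← Matrix.trace_sum, ← Finset.sum_mul,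
    ← Matrix.sum_kronecker, P.complete]

theorem sum_jointProb :
    letI := P.fintype; letI := Q.fintype
    ∑ x, jointProb P Q ρ x = ρ.trace.re := by
  let := P.fintype; let := Q.fintype
  simp only [Fintype.sum_prod_type, sum_jointProb_snd, ← Complex.re_sum, ← Matrix.trace_sum,
    ← Finset.sum_mul, ← Matrix.sum_kronecker, P.complete, Matrix.one_kronecker_one, one_mul]

theorem jointProb_nonneg (hρ : ρ.PosSemidef) (x : ιA × ιB) : 0 ≤ jointProb P Q ρ x := by
  refine Matrix.re_trace_mul_nonneg_of_isIdempotentElem ?_ ?_ hρ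
  · rw [Matrix.IsHermitian, Matrix.conjTranspose_kronecker, (P.herm _).eq, (Q.herm _).eq]
  · rw [IsIdempotentElem, ← Matrix.mul_kronecker_mul, P.idem, Q.idem]

end PVM

section States

theorem bellState_apply (x y : Fin 2 × Fin 2) :
    bellState x y = if x.1 = x.2 ∧ y.1 = y.2 then 1 / 2 else 0 := by
  have hsq : ((Real.sqrt 2 : ℝ) : ℂ)⁻¹ * ((Real.sqrt 2 : ℝ) : ℂ)⁻¹ = 1 / 2 := by
    rw [← mul_inv, ← Complex.ofReal_mul, Real.mul_self_sqrt zero_le_two]; norm_num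
  by_cases hx : x.1 = x.2 <;> by_cases hy : y.1 = y.2 <;>
    simp [bellState, bellVec, hx, hy, hsq]

theorem trace_kronecker_mul_bellState (A B : Matrix (Fin 2) (Fin 2) ℂ) :
    ((A ⊗ₖ B) * bellState).trace = (A * Bᵀ).trace / 2 := by
  simp only [Matrix.trace, Matrix.diag_apply, Matrix.mul_apply, Matrix.kroneckerMap_apply,
    bellState_apply, one_div, mul_ite, mul_zero, Fintype.sum_prod_type, Fin.sum_univ_two,
    Fin.isValue, true_and, zero_ne_one, false_and, ↓reduceIte, add_zero, one_ne_zero, zero_add,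
    Matrix.transpose_apply]
  ring

theorem trace_kronecker_mul_sigma2 (A B : Matrix (Fin 2) (Fin 2) ℂ) :
    ((A ⊗ₖ B) * sigma2).trace = (A.diag ⬝ᵥ B.diag) / 2 := by
  simp only [Matrix.trace, sigma2, Prod.ext_iff, one_div, Matrix.diag_apply, Matrix.mul_apply,
    Matrix.kroneckerMap_apply, Matrix.of_apply, mul_ite, mul_zero, Fintype.sum_prod_type,
    Fin.sum_univ_two, Fin.isValue, and_true, zero_ne_one, and_false, ↓reduceIte, add_zero,
    one_ne_zero, zero_add, dotProduct]
  ring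

theorem bellState_posSemidef : bellState.PosSemidef :=
  Matrix.posSemidef_vecMulVec_self_star bellVec

theorem sigma2_posSemidef : sigma2.PosSemidef := by
  have h : sigma2 = Matrix.diagonal fun x => if x.1 = x.2 then (1 / 2 : ℂ) else 0 := by
    ext x y
    by_cases hxy : x = y <;> simp [sigma2, hxy]
  rw [h]
  refine Matrix.PosSemidef.diagonal fun x => ?_
  split_ifs <;> simp

end States

section MaximallyMixedMarginals

variable {dA dB : Type*} [Fintype dA] [DecidableEq dA] [Fintype dB] [DecidableEq dB]

/-- Both partial traces of `ρ` are maximally mixed, expressed by duality against `A ⊗ 1` and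
`1 ⊗ B`. -/
def HasMaximallyMixedMarginals (ρ : Matrix (dA × dB) (dA × dB) ℂ) : Prop :=
  (∀ A : Matrix dA dA ℂ, ((A ⊗ₖ 1) * ρ).trace = A.trace / Fintype.card dA) ∧
    ∀ B : Matrix dB dB ℂ, ((1 ⊗ₖ B) * ρ).trace = B.trace / Fintype.card dB

theorem HasMaximallyMixedMarginals.trace_eq_one [Nonempty dA]
    {ρ : Matrix (dA × dB) (dA × dB) ℂ} (hρ : HasMaximallyMixedMarginals ρ) : ρ.trace = 1 := by
  have h := hρ.1 1
  rwa [Matrix.one_kronecker_one, one_mul, Matrix.trace_one,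
    div_self (Nat.cast_ne_zero.mpr Fintype.card_ne_zero)] at h

theorem bellState_hasMaximallyMixedMarginals : HasMaximallyMixedMarginals bellState :=
  ⟨fun A => by simp [trace_kronecker_mul_bellState],
    fun B => by simp [trace_kronecker_mul_bellState, Matrix.trace_transpose]⟩

theorem sigma2_hasMaximallyMixedMarginals : HasMaximallyMixedMarginals sigma2 :=
  ⟨fun A => by
      rw [trace_kronecker_mul_sigma2]; simp [Matrix.trace, dotProduct, Fin.sum_univ_two],
    fun B => by
      rw [trace_kronecker_mul_sigma2]; simp [Matrix.trace, dotProduct, Fin.sum_univ_two]⟩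

theorem HasMaximallyMixedMarginals.depol2 {ρ : Matrix (Fin 2 × Fin 2) (Fin 2 × Fin 2) ℂ}
    (hρ : HasMaximallyMixedMarginals ρ) (γ : ℝ) : HasMaximallyMixedMarginals (depol2 γ ρ) := by
  refine ⟨fun A => ?_, fun B => ?_⟩ <;>
  · simp only [_root_.depol2, Matrix.mul_add, Matrix.mul_smul, mul_one, Matrix.trace_add,
      Matrix.trace_smul, Matrix.trace_kronecker, Matrix.trace_one, hρ.1, hρ.2, Fintype.card_fin,
      Nat.cast_ofNat, smul_eq_mul]
    ring

end MaximallyMixedMarginals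

namespace PVM

variable {ιA ιB : Type*} (P : PVM ιA (Fin 2)) (Q : PVM ιB (Fin 2))
  {ρ : Matrix (Fin 2 × Fin 2) (Fin 2 × Fin 2) ℂ} {e₁ : Fin 2 → ιA} {e₂ : Fin 2 → ιB}

theorem jointProb_comp_prodMap_eq_binarySymmetric (hρ : HasMaximallyMixedMarginals ρ)
    (hP : P.IsBasisMeasurement e₁) (hQ : Q.IsBasisMeasurement e₂) :
    jointProb P Q ρ ∘ Prod.map e₁ e₂ =
      binarySymmetric (jointProb P Q ρ (e₁ 0, e₂ 0) + jointProb P Q ρ (e₁ 1, e₂ 1)) := by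
  let := P.fintype; let := Q.fintype
  refine eq_binarySymmetric_of_marginals _ (fun i => ?_) (fun j => ?_)
  · calc ∑ j, jointProb P Q ρ (e₁ i, e₂ j) = ∑ b, jointProb P Q ρ (e₁ i, b) :=
          Fintype.sum_of_injective e₂ hQ.1 _ _
            (fun b hb => jointProb_eq_zero_of_proj_snd P Q ρ _ (hQ.2.2 b hb)) fun _ => rfl
      _ = 1 / 2 := by simp [sum_jointProb_snd, hρ.1, hP.2.1]
  · calc ∑ i, jointProb P Q ρ (e₁ i, e₂ j) = ∑ a, jointProb P Q ρ (a, e₂ j) :=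
          Fintype.sum_of_injective e₁ hP.1 _ _
            (fun a ha => jointProb_eq_zero_of_proj_fst P Q ρ (hP.2.2 a ha) _) fun _ => rfl
      _ = 1 / 2 := by simp [sum_jointProb_fst, hρ.2, hQ.2.1]

theorem miOf_eq_mutualInfo_binarySymmetric (hρ : HasMaximallyMixedMarginals ρ)
    (hP : P.IsBasisMeasurement e₁) (hQ : Q.IsBasisMeasurement e₂) :
    miOf P Q ρ = mutualInfo
      (binarySymmetric (jointProb P Q ρ (e₁ 0, e₂ 0) + jointProb P Q ρ (e₁ 1, e₂ 1))) := by
  let := P.fintype; let := Q.fintype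
  rw [← jointProb_comp_prodMap_eq_binarySymmetric P Q hρ hP hQ,
    mutualInfo_comp_prodMap _ hP.1 hQ.1 fun a b hab => ?_]
  · rfl
  rcases hab with ha | hb
  · exact jointProb_eq_zero_of_proj_fst P Q ρ (hP.2.2 a ha) b
  · exact jointProb_eq_zero_of_proj_snd P Q ρ a (hQ.2.2 b hb)

theorem jointProb_add_jointProb_mem_Icc (hρ : HasMaximallyMixedMarginals ρ) (hpsd : ρ.PosSemidef)
    (hP : P.IsBasisMeasurement e₁) (hQ : Q.IsBasisMeasurement e₂) :
    jointProb P Q ρ (e₁ 0, e₂ 0) + jointProb P Q ρ (e₁ 1, e₂ 1) ∈ Set.Icc 0 1 := by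
  have hoff := congrFun (jointProb_comp_prodMap_eq_binarySymmetric P Q hρ hP hQ) (0, 1)
  simp only [Fin.isValue, comp_apply, Prod.map_apply, binarySymmetric, zero_ne_one,
    ↓reduceIte] at hoff
  have hoff_nonneg := jointProb_nonneg P Q ρ hpsd (e₁ 0, e₂ 1)
  exact ⟨add_nonneg (jointProb_nonneg P Q ρ hpsd _) (jointProb_nonneg P Q ρ hpsd _), by linarith⟩

theorem jointProb_depol2_of_isBasisMeasurement (γ : ℝ) (hP : P.IsBasisMeasurement e₁)
    (hQ : Q.IsBasisMeasurement e₂) (i j : Fin 2) :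
    jointProb P Q (depol2 γ ρ) (e₁ i, e₂ j) = (1 - γ) * jointProb P Q ρ (e₁ i, e₂ j) + γ / 4 := by
  simp only [jointProb, _root_.depol2, Matrix.mul_add, Matrix.mul_smul, mul_one, Matrix.trace_add,
    Matrix.trace_smul, Matrix.trace_kronecker, hP.2.1, hQ.2.1, smul_eq_mul, Complex.add_re,
    Complex.mul_re]
  simp

theorem miOf_eq_zero_of_forall_ne_left (hρ : ρ.trace = 1) {a : ιA}
    (hP : ∀ x, x ≠ a → P.proj x = 0) : miOf P Q ρ = 0 :=
  let := P.fintype; let := Q.fintype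
  mutualInfo_eq_zero_of_forall_ne_fst _ a
    (fun x b hx => jointProb_eq_zero_of_proj_fst P Q ρ (hP x hx) b) (by simp [sum_jointProb, hρ])

theorem miOf_eq_zero_of_forall_ne_right (hρ : ρ.trace = 1) {b : ιB}
    (hQ : ∀ y, y ≠ b → Q.proj y = 0) : miOf P Q ρ = 0 :=
  let := P.fintype; let := Q.fintype
  mutualInfo_eq_zero_of_forall_ne_snd _ b
    (fun a y hy => jointProb_eq_zero_of_proj_snd P Q ρ a (hQ y hy)) (by simp [sum_jointProb, hρ])

theorem miOf_depol2_le_of_isBasisMeasurement {γ : ℝ} (hγ : γ ∈ Set.Icc 0 1)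
    (hρ : HasMaximallyMixedMarginals ρ) (hpsd : ρ.PosSemidef)
    (hP : P.IsBasisMeasurement e₁) (hQ : Q.IsBasisMeasurement e₂) :
    miOf P Q (depol2 γ ρ) ≤ mutualInfo (binarySymmetric (1 - γ / 2)) := by
  obtain ⟨h0, h1⟩ := P.jointProb_add_jointProb_mem_Icc Q hρ hpsd hP hQ
  rw [P.miOf_eq_mutualInfo_binarySymmetric Q (hρ.depol2 γ) hP hQ,
    P.jointProb_depol2_of_isBasisMeasurement Q γ hP hQ,
    P.jointProb_depol2_of_isBasisMeasurement Q γ hP hQ]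
  obtain ⟨hγ0, hγ1⟩ := hγ
  exact mutualInfo_binarySymmetric_le (by linarith) ⟨by nlinarith, by nlinarith⟩

end PVM

theorem miOf_compPVM_depol2 {ρ : Matrix (Fin 2 × Fin 2) (Fin 2 × Fin 2) ℂ}
    (hρ : HasMaximallyMixedMarginals ρ) (hdiag : (ρ (0, 0) (0, 0)).re + (ρ (1, 1) (1, 1)).re = 1)
    (γ : ℝ) :
    miOf (compPVM (Fin 2)) (compPVM (Fin 2)) (depol2 γ ρ) =
      mutualInfo (binarySymmetric (1 - γ / 2)) := by
  have hc := PVM.isBasisMeasurement_compPVM (d := Fin 2)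
  rw [PVM.miOf_eq_mutualInfo_binarySymmetric _ _ (hρ.depol2 γ) hc hc,
    PVM.jointProb_depol2_of_isBasisMeasurement _ _ γ hc hc,
    PVM.jointProb_depol2_of_isBasisMeasurement _ _ γ hc hc]
  simp only [id, PVM.jointProb_compPVM]
  congr 2
  linear_combination (1 - γ) * hdiag

/-- for the two-qubit depolarized Bell state or depolarized shared
random bit with strength `γ ∈ [0,1)`, among all product PVM measurements the
computational-basis measurement on both qubits maximizes the mutual information of the
outcome distribution. -/
theorem computational_basis_maximizes_mutual_information
    (γ : ℝ) (hγ : γ ∈ Set.Ico (0 : ℝ) 1)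
    (ρ : Matrix (Fin 2 × Fin 2) (Fin 2 × Fin 2) ℂ)
    (hρ : ρ = bellState ∨ ρ = sigma2)
    (ιA ιB : Type) (P : PVM ιA (Fin 2)) (Q : PVM ιB (Fin 2)) :
    miOf P Q (depol2 γ ρ) ≤ miOf (compPVM (Fin 2)) (compPVM (Fin 2)) (depol2 γ ρ) := by
  have hmarg : HasMaximallyMixedMarginals ρ := by
    rcases hρ with rfl | rfl
    exacts [bellState_hasMaximallyMixedMarginals, sigma2_hasMaximallyMixedMarginals]
  have hpsd : ρ.PosSemidef := by
    rcases hρ with rfl | rfl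
    exacts [bellState_posSemidef, sigma2_posSemidef]
  have hdiag : (ρ (0, 0) (0, 0)).re + (ρ (1, 1) (1, 1)).re = 1 := by
    rcases hρ with rfl | rfl <;> norm_num [bellState_apply, sigma2]
  have htrace := (hmarg.depol2 γ).trace_eq_one
  rw [miOf_compPVM_depol2 hmarg hdiag γ]
  rcases P.qubit_cases with ⟨a, hP⟩ | ⟨e₁, hP⟩
  · rw [P.miOf_eq_zero_of_forall_ne_left Q htrace hP]
    exact mutualInfo_binarySymmetric_nonneg _
  rcases Q.qubit_cases with ⟨b, hQ⟩ | ⟨e₂, hQ⟩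
  · rw [P.miOf_eq_zero_of_forall_ne_right Q htrace hQ]
    exact mutualInfo_binarySymmetric_nonneg _
  exact P.miOf_depol2_le_of_isBasisMeasurement Q (Set.Ico_subset_Icc_self hγ) hmarg hpsd hP hQ
end
end

section
/- Let γ ∈ [0,1] and let E_γ denote the two-qubit depolarizing channel E_γ(ρ) = (1−γ)ρ + (γ/4)I₄. Then: (i) measuring all four qubits of the state (I₂/2) ⊗ E_γ(|Φ⟩⟨Φ|) ⊗ (I₂/2) in the computational basis yields an outcome distribution with Shannon entropy 4 − ((2−γ)/2)·log₂(2−γ) − (γ/2)·log₂γ; and (ii) measuring all four qubits of the state E_γ(σ₂) ⊗ E_γ(σ₂) in the computational basis yields an outcome distribution with Shannon entropy 4 − (2−γ)·log₂(2−γ) − γ·log₂γ. -/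
open scoped Kronecker Matrix Classical

noncomputable section

/-- The maximally mixed single-qubit state `I₂/2`. -/
def idHalf : Matrix (Fin 2) (Fin 2) ℂ := ((1 : ℂ)/2) • 1

/-!
The depolarizing channel only moves weight along the diagonal, and `|Φ⟩⟨Φ|` and `σ₂` have the
same diagonal, so measuring either noisy pair gives the distribution with weight `(2 - γ)/4` on
`00, 11` and `γ/4` on `01, 10`, of entropy `h = 2 - ((2 - γ)/2) log₂(2 - γ) - (γ/2) log₂ γ`.
The diagonal of a Kronecker product is the product of the diagonals and Shannon entropy is
additive on product distributions, so the two entropies are `1 + h + 1` and `h + h`.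
-/

theorem mul_logb_mul_eq (b x y : ℝ) :
    x * y * Real.logb b (x * y) = y * (x * Real.logb b x) + x * (y * Real.logb b y) := by
  rcases eq_or_ne x 0 with rfl | hx
  · simp
  rcases eq_or_ne y 0 with rfl | hy
  · simp
  rw [Real.logb_mul hx hy]
  ring

theorem shannon_mul {α β : Type*} [Fintype α] [Fintype β] {p : α → ℝ} {q : β → ℝ}
    (hp : ∑ a, p a = 1) (hq : ∑ b, q b = 1) :
    shannon (fun x : α × β => p x.1 * q x.2) = shannon p + shannon q := by
  simp only [shannon, Fintype.sum_prod_type, mul_logb_mul_eq, Finset.sum_add_distrib,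
    ← Finset.mul_sum, ← Finset.sum_mul, hp, hq]
  ring

theorem sum_prod_mul_eq_one {α β : Type*} [Fintype α] [Fintype β] {p : α → ℝ} {q : β → ℝ}
    (hp : ∑ a, p a = 1) (hq : ∑ b, q b = 1) : ∑ x : α × β, p x.1 * q x.2 = 1 := by
  rw [Fintype.sum_prod_type, ← Fintype.sum_mul_sum, hp, hq, one_mul]

theorem mul_logb_div_four (x : ℝ) :
    x / 4 * Real.logb 2 (x / 4) = x / 4 * Real.logb 2 x - x / 2 := by
  rcases eq_or_ne x 0 with rfl | hx
  · simp
  have h4 : Real.logb 2 4 = 2 := by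
    rw [show (4 : ℝ) = 2 ^ 2 by norm_num, Real.logb_pow, Real.logb_self_eq_one one_lt_two]; norm_num
  rw [Real.logb_div hx four_ne_zero, h4]
  ring

namespace Matrix

variable {m n : Type*}

theorem kronecker_apply_self_of_diag_eq_ofReal {A : Matrix m m ℂ} {B : Matrix n n ℂ}
    {p : m → ℝ} {q : n → ℝ} (hA : ∀ i, A i i = p i) (hB : ∀ j, B j j = q j) (x : m × n) :
    (A ⊗ₖ B) x x = ((p x.1 * q x.2 : ℝ) : ℂ) := by
  rw [kroneckerMap_apply, hA, hB, Complex.ofReal_mul]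

end Matrix

def uniformBit : Fin 2 → ℝ := fun _ => 1 / 2

def noisyBitPair (γ : ℝ) (b : Fin 2 × Fin 2) : ℝ := if b.1 = b.2 then (2 - γ) / 4 else γ / 4

theorem sum_uniformBit : ∑ i, uniformBit i = 1 := by
  norm_num [uniformBit]

theorem sum_noisyBitPair (γ : ℝ) : ∑ b, noisyBitPair γ b = 1 := by
  simp only [noisyBitPair, Fintype.sum_prod_type, Fin.sum_univ_two, ↓reduceIte, zero_ne_one,
    one_ne_zero]
  ring

theorem shannon_uniformBit : shannon uniformBit = 1 := by
  simp only [shannon, uniformBit, Fin.sum_univ_two, one_div, Real.logb_inv,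
    Real.logb_self_eq_one one_lt_two]
  norm_num

theorem shannon_noisyBitPair (γ : ℝ) :
    shannon (noisyBitPair γ) = 2 - (2 - γ) / 2 * Real.logb 2 (2 - γ) - γ / 2 * Real.logb 2 γ := by
  simp only [shannon, noisyBitPair, Fintype.sum_prod_type, Fin.sum_univ_two, ↓reduceIte,
    zero_ne_one, one_ne_zero, mul_logb_div_four]
  ring

theorem idHalf_apply_self (i : Fin 2) : idHalf i i = (uniformBit i : ℂ) := by
  simp [idHalf, uniformBit]

theorem depol2_apply_self_of_diag_eq {ρ : Matrix (Fin 2 × Fin 2) (Fin 2 × Fin 2) ℂ}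
    (hρ : ∀ b, ρ b b = if b.1 = b.2 then 1 / 2 else 0) (γ : ℝ) (b : Fin 2 × Fin 2) :
    depol2 γ ρ b b = (noisyBitPair γ b : ℂ) := by
  simp only [depol2, Matrix.add_apply, Matrix.smul_apply, Matrix.one_apply_eq, hρ, noisyBitPair]
  split_ifs <;> push_cast <;> ring

theorem bellState_apply_self (b : Fin 2 × Fin 2) :
    bellState b b = if b.1 = b.2 then 1 / 2 else 0 := by
  simp only [bellState, bellVec, Matrix.of_apply]
  split_ifs
  · rw [Complex.star_def, ← Complex.ofReal_inv, Complex.conj_ofReal, ← Complex.ofReal_mul,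
      ← mul_inv, Real.mul_self_sqrt zero_le_two]
    norm_num
  · simp

theorem sigma2_apply_self (b : Fin 2 × Fin 2) :
    sigma2 b b = if b.1 = b.2 then 1 / 2 else 0 := by
  simp [sigma2]

theorem computational_entropy_of_noisy_triangle_states_general
    (γ : ℝ) :
    shannon (fun x : Fin 2 × ((Fin 2 × Fin 2) × Fin 2) =>
        ((idHalf ⊗ₖ (depol2 γ bellState ⊗ₖ idHalf)) x x).re)
      = 4 - ((2 - γ)/2) * Real.logb 2 (2 - γ) - (γ/2) * Real.logb 2 γ ∧
    shannon (fun x : (Fin 2 × Fin 2) × (Fin 2 × Fin 2) =>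
        ((depol2 γ sigma2 ⊗ₖ depol2 γ sigma2) x x).re)
      = 4 - (2 - γ) * Real.logb 2 (2 - γ) - γ * Real.logb 2 γ := by
  have hbell := depol2_apply_self_of_diag_eq bellState_apply_self γ
  have hsigma := depol2_apply_self_of_diag_eq sigma2_apply_self γ
  have hmid := Matrix.kronecker_apply_self_of_diag_eq_ofReal hbell idHalf_apply_self
  simp only [Matrix.kronecker_apply_self_of_diag_eq_ofReal idHalf_apply_self hmid,
    Matrix.kronecker_apply_self_of_diag_eq_ofReal hsigma hsigma, Complex.ofReal_re]
  rw [shannon_mul sum_uniformBit (sum_prod_mul_eq_one (sum_noisyBitPair γ) sum_uniformBit),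
    shannon_mul (sum_noisyBitPair γ) sum_uniformBit,
    shannon_mul (sum_noisyBitPair γ) (sum_noisyBitPair γ),
    shannon_uniformBit, shannon_noisyBitPair]
  constructor <;> ring

/-- computational-basis Shannon entropies of the two noisy four-qubit
triangle-network states. -/
theorem computational_entropy_of_noisy_triangle_states
    (γ : ℝ) (hγ : γ ∈ Set.Icc (0 : ℝ) 1) :
    shannon (fun x : Fin 2 × ((Fin 2 × Fin 2) × Fin 2) =>
        ((idHalf ⊗ₖ (depol2 γ bellState ⊗ₖ idHalf)) x x).re)
      = 4 - ((2 - γ)/2) * Real.logb 2 (2 - γ) - (γ/2) * Real.logb 2 γ ∧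
    shannon (fun x : (Fin 2 × Fin 2) × (Fin 2 × Fin 2) =>
        ((depol2 γ sigma2 ⊗ₖ depol2 γ sigma2) x x).re)
      = 4 - (2 - γ) * Real.logb 2 (2 - γ) - γ * Real.logb 2 γ :=
  computational_entropy_of_noisy_triangle_states_general γ

end
end

section
/- Consider two bipartitions of four qubits into parts A = {q₁, q₂} and B = {q₃, q₄}. (i) For the state ρ₁ = (I₂/2)_{q₁} ⊗ |Φ⟩⟨Φ|_{q₂q₃} ⊗ (I₂/2)_{q₄} (a Bell pair shared between A and B plus one maximally mixed qubit on each side), the measured mutual information across the bipartition is I_m(A;B) = 1. (ii) For the state ρ₂ = σ₂^{q₁q₃} ⊗ σ₂^{q₂q₄} (two copies of σ₂, each shared between A and B), the measured mutual information across the bipartition is I_m(A;B) = 2. Hence the two triangle networks, whose node pairs realize exactly these joint states, are distinguished by the measured mutual information even though every node in both networks has reduced-state von Neumann entropy 2. -/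
/-!
For a product measurement with outcome distribution `p`, the classical mutual information is at
most `log₂ C` as soon as `p(a,b) ≤ C p(a) p(b)` for all outcomes. Both states have maximally mixed
marginals, so `p(a) = tr Πₐ / 4` and `p(b) = tr Π_b / 4`. For `ρ₂` the joint probability is
`¼ ∑_c (Πₐ)_cc (Π_b)_cc ≤ ¼ tr Πₐ tr Π_b`, giving `C = 4`. For `ρ₁` the Bell pair turns it into
`⅛ ∑_{s,t} M_st N_st`, where `M` and `N` are the partial traces of `Πₐ` and `Π_b` onto the two
halves of the pair; by Schur's product theorem applied to `M` and `tr N • 1 - N ≥ 0` this is at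
most `⅛ tr M tr N`, giving `C = 2`. Measuring both sides in the computational basis attains both
bounds, and every reduced state is maximally mixed on two qubits, of entropy `2`.
-/

open scoped Kronecker Matrix Classical

noncomputable section

/-- Partial trace over the second tensor factor. -/
def ptraceR {dA dB : Type*} [Fintype dB] (ρ : Matrix (dA × dB) (dA × dB) ℂ) :
    Matrix dA dA ℂ :=
  Matrix.of fun a a' => ∑ b, ρ (a, b) (a', b)

/-- Partial trace over the first tensor factor. -/
def ptraceL {dA dB : Type*} [Fintype dA] (ρ : Matrix (dA × dB) (dA × dB) ℂ) :
    Matrix dB dB ℂ :=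
  Matrix.of fun b b' => ∑ a, ρ (a, b) (a, b')

/-- The four-qubit state `(I₂/2)_{q₁} ⊗ |Φ⟩⟨Φ|_{q₂q₃} ⊗ (I₂/2)_{q₄}`, arranged as a
bipartite state over `A = {q₁,q₂}` and `B = {q₃,q₄}`. -/
def triangleRho1 :
    Matrix ((Fin 2 × Fin 2) × (Fin 2 × Fin 2)) ((Fin 2 × Fin 2) × (Fin 2 × Fin 2)) ℂ :=
  Matrix.of fun x y =>
    (if x.1.1 = y.1.1 then (1 : ℂ)/2 else 0) *
      bellState (x.1.2, x.2.1) (y.1.2, y.2.1) *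
      (if x.2.2 = y.2.2 then (1 : ℂ)/2 else 0)

/-- The four-qubit state `σ₂^{q₁q₃} ⊗ σ₂^{q₂q₄}`, arranged as a bipartite state over
`A = {q₁,q₂}` and `B = {q₃,q₄}`. -/
def triangleRho2 :
    Matrix ((Fin 2 × Fin 2) × (Fin 2 × Fin 2)) ((Fin 2 × Fin 2) × (Fin 2 × Fin 2)) ℂ :=
  Matrix.of fun x y =>
    sigma2 (x.1.1, x.2.1) (y.1.1, y.2.1) * sigma2 (x.1.2, x.2.2) (y.1.2, y.2.2)

open scoped ComplexOrder

theorem Complex.re_le_re_mul_re {z u v : ℂ} (hu : 0 ≤ u) (h : z ≤ u * v) :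
    z.re ≤ u.re * v.re := by
  simpa [Complex.mul_re, ← (Complex.nonneg_iff.1 hu).2] using (Complex.le_def.1 h).1

namespace Matrix

variable {n 𝕜 : Type*} [Fintype n] [RCLike 𝕜]

theorem PosSemidef.trace_smul_one_sub [DecidableEq n] {A : Matrix n n 𝕜} (hA : A.PosSemidef) :
    (A.trace • (1 : Matrix n n 𝕜) - A).PosSemidef := by
  set U := hA.isHermitian.eigenvectorUnitary
  set ev := hA.isHermitian.eigenvalues
  have hdiag (c : 𝕜) : c • (1 : Matrix n n 𝕜) - A
      = (U : Matrix n n 𝕜) * diagonal (fun i => c - ev i) * (U : Matrix n n 𝕜)ᴴ := by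
    rw [hA.isHermitian.spectral_theorem, ← map_one (Unitary.conjStarAlgAut 𝕜 _ U),
      ← map_smul, ← map_sub, Unitary.conjStarAlgAut_apply, smul_one_eq_diagonal, diagonal_sub]
    rfl
  rw [hdiag]
  refine PosSemidef.mul_mul_conjTranspose_same (posSemidef_diagonal_iff.2 fun i => ?_) _
  rw [hA.isHermitian.trace_eq_sum_eigenvalues, sub_nonneg, ← RCLike.ofReal_sum,
    RCLike.ofReal_le_ofReal]
  exact Finset.single_le_sum (fun j _ => hA.eigenvalues_nonneg j) (Finset.mem_univ i)

theorem PosSemidef.sum_mul_apply_nonneg {A B : Matrix n n 𝕜} (hA : A.PosSemidef)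
    (hB : B.PosSemidef) : 0 ≤ ∑ s, ∑ t, A s t * B s t := by
  simpa [dotProduct, mulVec, hadamard_apply] using (hA.hadamard hB).dotProduct_mulVec_nonneg 1

theorem PosSemidef.sum_mul_apply_le_trace_mul_trace [DecidableEq n] {A B : Matrix n n 𝕜}
    (hA : A.PosSemidef) (hB : B.PosSemidef) :
    ∑ s, ∑ t, A s t * B s t ≤ A.trace * B.trace := by
  have h := hA.sum_mul_apply_nonneg hB.trace_smul_one_sub
  simp only [sub_apply, smul_apply, one_apply, smul_eq_mul, mul_sub, mul_ite, mul_one, mul_zero,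
    Finset.sum_sub_distrib, Finset.sum_ite_eq, Finset.mem_univ, if_true, sub_nonneg] at h
  simpa [trace, Finset.sum_mul, mul_comm] using h

theorem PosSemidef.sum_diag_mul_nonneg {A B : Matrix n n 𝕜} (hA : A.PosSemidef)
    (hB : B.PosSemidef) : 0 ≤ ∑ c, A c c * B c c :=
  Finset.sum_nonneg fun _ _ => mul_nonneg hA.diag_nonneg hB.diag_nonneg

theorem PosSemidef.sum_diag_mul_le_trace_mul_trace [DecidableEq n] {A B : Matrix n n 𝕜}
    (hA : A.PosSemidef) (hB : B.PosSemidef) : ∑ c, A c c * B c c ≤ A.trace * B.trace := by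
  have hdiag {M : Matrix n n 𝕜} (hM : M.PosSemidef) : (diagonal M.diag).PosSemidef :=
    posSemidef_diagonal_iff.2 fun _ => hM.diag_nonneg
  simpa [diagonal_apply, trace] using (hdiag hA).sum_mul_apply_le_trace_mul_trace (hdiag hB)

end Matrix

theorem logb_two_two_pow (k : ℕ) : Real.logb 2 ((2 : ℝ) ^ k) = k := by
  rw [Real.logb_pow, Real.logb_self_eq_one one_lt_two, mul_one]

theorem logb_two_card_fin_two_prod : Real.logb 2 (Fintype.card (Fin 2 × Fin 2)) = 2 := by
  rw [Fintype.card_prod, Fintype.card_fin, Nat.cast_mul, Nat.cast_ofNat, ← sq, logb_two_two_pow]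
  rfl

theorem shannon_ite {α : Type*} [Fintype α] (q : α → Prop) [DecidablePred q] (c : ℝ) :
    shannon (fun x => if q x then c else 0)
      = -((Finset.univ.filter q).card * (c * Real.logb 2 c)) := by
  simp [shannon, apply_ite (fun t : ℝ => t * Real.logb 2 t), Finset.sum_ite]

theorem shannon_uniform {α : Type*} [Fintype α] :
    shannon (fun _ : α => (Fintype.card α : ℝ)⁻¹) = Real.logb 2 (Fintype.card α) := by
  rcases isEmpty_or_nonempty α with hα | hα
  · simp [shannon]
  simp [shannon, Real.logb_inv]

theorem shannon_marginals_sub_shannon_le_logb {ι κ : Type*} [Fintype ι] [Fintype κ]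
    (p : ι × κ → ℝ) {C : ℝ} (hC : 0 < C) (hp : ∀ x, 0 ≤ p x) (hsum : ∑ x, p x = 1)
    (hle : ∀ a b, p (a, b) ≤ C * (∑ b', p (a, b')) * (∑ a', p (a', b))) :
    shannon (fun a => ∑ b, p (a, b)) + shannon (fun b => ∑ a, p (a, b)) - shannon p
      ≤ Real.logb 2 C := by
  set pA : ι → ℝ := fun a => ∑ b, p (a, b)
  set pB : κ → ℝ := fun b => ∑ a, p (a, b)
  have hpoint (a : ι) (b : κ) : p (a, b) * (Real.logb 2 (p (a, b)) - Real.logb 2 (pA a)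
      - Real.logb 2 (pB b)) ≤ p (a, b) * Real.logb 2 C := by
    rcases (hp (a, b)).eq_or_lt with h0 | hpos
    · simp [← h0]
    have hA : 0 < pA a :=
      hpos.trans_le <| Finset.single_le_sum (fun b _ => hp (a, b)) (Finset.mem_univ b)
    have hB : 0 < pB b :=
      hpos.trans_le <| Finset.single_le_sum (fun a _ => hp (a, b)) (Finset.mem_univ a)
    have hlog : Real.logb 2 (p (a, b)) ≤ Real.logb 2 (C * pA a * pB b) :=
      Real.logb_le_logb_of_le (by norm_num) hpos (hle a b)
    rw [Real.logb_mul (by positivity) hB.ne', Real.logb_mul hC.ne' hA.ne'] at hlog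
    exact mul_le_mul_of_nonneg_left (by linarith) hpos.le
  calc shannon pA + shannon pB - shannon p
      = ∑ a, ∑ b, p (a, b) * (Real.logb 2 (p (a, b)) - Real.logb 2 (pA a)
          - Real.logb 2 (pB b)) := by
        simp only [shannon, pA, pB, Finset.sum_mul, Fintype.sum_prod_type, mul_sub,
          Finset.sum_sub_distrib]
        rw [Finset.sum_comm (f := fun b a => p (a, b) * _)]
        ring
    _ ≤ ∑ a, ∑ b, p (a, b) * Real.logb 2 C :=
        Finset.sum_le_sum fun a _ => Finset.sum_le_sum fun b _ => hpoint a b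
    _ = Real.logb 2 C := by rw [← Fintype.sum_prod_type', ← Finset.sum_mul, hsum, one_mul]

namespace PVM

variable {ι d : Type*} [Fintype d] [DecidableEq d] (P : PVM ι d)

theorem sum_proj [Fintype ι] : ∑ a, P.proj a = 1 := by
  convert P.complete

theorem posSemidef_proj (a : ι) : (P.proj a).PosSemidef := by
  simpa only [(P.herm a).eq, P.idem a] using Matrix.posSemidef_conjTranspose_mul_self (P.proj a)

theorem sum_pvmProb [Fintype ι] (σ : Matrix d d ℂ) : ∑ a, pvmProb P σ a = σ.trace.re := by
  simp only [pvmProb, ← Complex.re_sum, ← Matrix.trace_sum, ← Finset.sum_mul, P.sum_proj,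
    one_mul]

end PVM

section PartialTrace

variable {dA dB : Type*}

theorem trace_ptraceR [Fintype dA] [Fintype dB] (ρ : Matrix (dA × dB) (dA × dB) ℂ) :
    (ptraceR ρ).trace = ρ.trace := by
  simp [Matrix.trace, ptraceR, Fintype.sum_prod_type]

theorem trace_ptraceL [Fintype dA] [Fintype dB] (ρ : Matrix (dA × dB) (dA × dB) ℂ) :
    (ptraceL ρ).trace = ρ.trace := by
  simp [Matrix.trace, ptraceL, Fintype.sum_prod_type, Finset.sum_comm (γ := dA)]

theorem ptraceR_eq_sum_submatrix [Fintype dB] (ρ : Matrix (dA × dB) (dA × dB) ℂ) :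
    ptraceR ρ = ∑ b, ρ.submatrix (·, b) (·, b) := by
  ext; simp [ptraceR, Matrix.sum_apply]

theorem ptraceL_eq_sum_submatrix [Fintype dA] (ρ : Matrix (dA × dB) (dA × dB) ℂ) :
    ptraceL ρ = ∑ a, ρ.submatrix (a, ·) (a, ·) := by
  ext; simp [ptraceL, Matrix.sum_apply]

theorem Matrix.PosSemidef.ptraceR [Fintype dB] {ρ : Matrix (dA × dB) (dA × dB) ℂ}
    (hρ : ρ.PosSemidef) : (ptraceR ρ).PosSemidef := by
  rw [ptraceR_eq_sum_submatrix]
  exact Matrix.posSemidef_sum _ fun b _ => hρ.submatrix _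

theorem Matrix.PosSemidef.ptraceL [Fintype dA] {ρ : Matrix (dA × dB) (dA × dB) ℂ}
    (hρ : ρ.PosSemidef) : (ptraceL ρ).PosSemidef := by
  rw [ptraceL_eq_sum_submatrix]
  exact Matrix.posSemidef_sum _ fun a _ => hρ.submatrix _

theorem trace_kronecker_one_mul [Fintype dA] [Fintype dB] [DecidableEq dB]
    (X : Matrix dA dA ℂ) (ρ : Matrix (dA × dB) (dA × dB) ℂ) :
    ((X ⊗ₖ (1 : Matrix dB dB ℂ)) * ρ).trace = (X * ptraceR ρ).trace := by
  simp [Matrix.trace, Matrix.mul_apply, Matrix.one_apply, ptraceR, Fintype.sum_prod_type,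
    Finset.mul_sum]
  exact Finset.sum_congr rfl fun _ _ => Finset.sum_comm

theorem trace_one_kronecker_mul [Fintype dA] [Fintype dB] [DecidableEq dA]
    (Y : Matrix dB dB ℂ) (ρ : Matrix (dA × dB) (dA × dB) ℂ) :
    (((1 : Matrix dA dA ℂ) ⊗ₖ Y) * ρ).trace = (Y * ptraceL ρ).trace := by
  simp [Matrix.trace, Matrix.mul_apply, Matrix.one_apply, ptraceL, Fintype.sum_prod_type,
    Finset.mul_sum]
  rw [Finset.sum_comm]
  exact Finset.sum_congr rfl fun _ _ => Finset.sum_comm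

end PartialTrace

section MaximallyMixed

variable (d : Type*) [Fintype d] [DecidableEq d]

def maximallyMixed : Matrix d d ℂ := (Fintype.card d : ℝ)⁻¹ • 1

theorem trace_maximallyMixed [Nonempty d] : (maximallyMixed d).trace = 1 := by
  simp [maximallyMixed]

theorem eigenvalues_maximallyMixed (h : (maximallyMixed d).IsHermitian) (k : d) :
    h.eigenvalues k = (Fintype.card d : ℝ)⁻¹ := by
  have : Nonempty d := ⟨k⟩
  have hk : h.eigenvalues k ∈ spectrum ℝ (algebraMap ℝ (Matrix d d ℂ) (Fintype.card d)⁻¹) := by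
    simpa [maximallyMixed, Algebra.algebraMap_eq_smul_one] using h.eigenvalues_mem_spectrum_real k
  rwa [spectrum.scalar_eq, Set.mem_singleton_iff] at hk

theorem vnEntropy_maximallyMixed :
    vnEntropy (maximallyMixed d) = Real.logb 2 (Fintype.card d) := by
  have hH : (maximallyMixed d).IsHermitian := by
    simp [maximallyMixed, Matrix.IsHermitian, Matrix.conjTranspose_smul]
  rcases isEmpty_or_nonempty d with hd | hd
  · simp [vnEntropy, hH]
  rw [vnEntropy, dif_pos hH]
  simp only [eigenvalues_maximallyMixed, Finset.sum_const, Finset.card_univ, nsmul_eq_mul,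
    Real.logb_inv]
  field_simp

theorem pvmProb_maximallyMixed {ι : Type*} (P : PVM ι d) (a : ι) :
    pvmProb P (maximallyMixed d) a = (P.proj a).trace.re / Fintype.card d := by
  rw [pvmProb, maximallyMixed, Matrix.mul_smul, mul_one, Matrix.trace_smul, Complex.smul_re,
    smul_eq_mul, div_eq_inv_mul]

end MaximallyMixed

theorem pvmProb_compPVM {d : Type*} [Fintype d] [DecidableEq d] (σ : Matrix d d ℂ) (x : d) :
    pvmProb (compPVM d) σ x = (σ x x).re := by
  simp [pvmProb, compPVM, Matrix.trace, Matrix.mul_apply, Matrix.diagonal_apply]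

section Measurement

variable {ιA ιB dA dB : Type*} [Fintype dA] [DecidableEq dA] [Fintype dB] [DecidableEq dB]
  (P : PVM ιA dA) (Q : PVM ιB dB) (ρ : Matrix (dA × dB) (dA × dB) ℂ)

theorem sum_jointProb_right [Fintype ιB] (a : ιA) :
    ∑ b, jointProb P Q ρ (a, b) = pvmProb P (ptraceR ρ) a := by
  have hsum : ∑ b, P.proj a ⊗ₖ Q.proj b = P.proj a ⊗ₖ (1 : Matrix dB dB ℂ) := by
    rw [← Q.sum_proj]
    ext
    simp [Matrix.sum_apply, Finset.mul_sum]
  simp only [jointProb, pvmProb, ← Complex.re_sum, ← Matrix.trace_sum, ← Finset.sum_mul, hsum,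
    trace_kronecker_one_mul]

theorem sum_jointProb_left [Fintype ιA] (b : ιB) :
    ∑ a, jointProb P Q ρ (a, b) = pvmProb Q (ptraceL ρ) b := by
  have hsum : ∑ a, P.proj a ⊗ₖ Q.proj b = (1 : Matrix dA dA ℂ) ⊗ₖ Q.proj b := by
    rw [← P.sum_proj]
    ext
    simp [Matrix.sum_apply, Finset.sum_mul]
  simp only [jointProb, pvmProb, ← Complex.re_sum, ← Matrix.trace_sum, ← Finset.sum_mul, hsum,
    trace_one_kronecker_mul]

theorem miOf_eq_shannon [Fintype ιA] [Fintype ιB] :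
    miOf P Q ρ = shannon (pvmProb P (ptraceR ρ)) + shannon (pvmProb Q (ptraceL ρ))
      - shannon (jointProb P Q ρ) := by
  obtain rfl : P.fintype = ‹_› := Subsingleton.elim _ _
  obtain rfl : Q.fintype = ‹_› := Subsingleton.elim _ _
  simp only [miOf, sum_jointProb_right, sum_jointProb_left]

theorem miOf_le_logb {C : ℝ} (hC : 0 < C) (hρ : ρ.trace = 1)
    (hp : ∀ a b, 0 ≤ jointProb P Q ρ (a, b))
    (hle : ∀ a b, jointProb P Q ρ (a, b)
      ≤ C * pvmProb P (ptraceR ρ) a * pvmProb Q (ptraceL ρ) b) :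
    miOf P Q ρ ≤ Real.logb 2 C := by
  let := P.fintype; let := Q.fintype
  refine shannon_marginals_sub_shannon_le_logb _ hC (fun x => hp x.1 x.2) ?_ fun a b => ?_
  · rw [Fintype.sum_prod_type]
    simp only [sum_jointProb_right, P.sum_pvmProb, trace_ptraceR, hρ, Complex.one_re]
  · rw [sum_jointProb_right, sum_jointProb_left]
    exact hle a b

theorem jointProb_compPVM (x : dA) (w : dB) :
    jointProb (compPVM dA) (compPVM dB) ρ (x, w) = (ρ (x, w) (x, w)).re := by
  have hproj : (compPVM dA).proj x ⊗ₖ (compPVM dB).proj w = (compPVM (dA × dB)).proj (x, w) := by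
    simp only [compPVM, Matrix.kroneckerMap_diagonal_diagonal _ zero_mul mul_zero, Prod.ext_iff,
      ite_and, ite_mul, one_mul, zero_mul]
  rw [jointProb, hproj, ← pvmProb, pvmProb_compPVM]

end Measurement

theorem miOf_compPVM {d : Type*} [Fintype d] [DecidableEq d] (ρ : Matrix (d × d) (d × d) ℂ)
    (hR : ptraceR ρ = maximallyMixed d) (hL : ptraceL ρ = maximallyMixed d) :
    miOf (compPVM d) (compPVM d) ρ
      = 2 * Real.logb 2 (Fintype.card d) - shannon (fun x => (ρ x x).re) := by
  have hmarg : pvmProb (compPVM d) (maximallyMixed d) = fun _ => (Fintype.card d : ℝ)⁻¹ := by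
    funext x
    simp [pvmProb_compPVM, maximallyMixed]
  have hjoint : jointProb (compPVM d) (compPVM d) ρ = fun x => (ρ x x).re :=
    funext fun x => jointProb_compPVM ρ x.1 x.2
  rw [miOf_eq_shannon, hR, hL, hmarg, shannon_uniform, hjoint]
  ring

theorem measuredMI_eq_of_isGreatest {dA dB : Type*} [Fintype dA] [DecidableEq dA] [Fintype dB]
    [DecidableEq dB] {ρ : Matrix (dA × dB) (dA × dB) ℂ} {c : ℝ}
    (hle : ∀ (ιA ιB : Type) (P : PVM ιA dA) (Q : PVM ιB dB), miOf P Q ρ ≤ c)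
    {ιA ιB : Type} (P : PVM ιA dA) (Q : PVM ιB dB) (hPQ : miOf P Q ρ = c) :
    measuredMI ρ = c :=
  IsGreatest.csSup_eq ⟨⟨ιA, ιB, P, Q, hPQ.symm⟩, by
    rintro _ ⟨ιA, ιB, P, Q, rfl⟩
    exact hle ιA ιB P Q⟩

theorem bellState_apply_s17 (u v : Fin 2 × Fin 2) :
    bellState u v = if u.1 = u.2 ∧ v.1 = v.2 then 1 / 2 else 0 := by
  have hsq : ((Real.sqrt 2 : ℝ) : ℂ)⁻¹ * ((Real.sqrt 2 : ℝ) : ℂ)⁻¹ = 1 / 2 := by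
    rw [← mul_inv, ← Complex.ofReal_mul, Real.mul_self_sqrt zero_le_two]
    norm_num
  by_cases hu : u.1 = u.2 <;> by_cases hv : v.1 = v.2 <;> simp [bellState, bellVec, hu, hv, hsq]

theorem triangleRho1_apply (x y : (Fin 2 × Fin 2) × (Fin 2 × Fin 2)) :
    triangleRho1 x y
      = if x.1.1 = y.1.1 ∧ x.1.2 = x.2.1 ∧ y.1.2 = y.2.1 ∧ x.2.2 = y.2.2 then 1 / 8 else 0 := by
  simp only [triangleRho1, Matrix.of_apply, bellState_apply_s17]
  split_ifs <;> grind

theorem triangleRho2_apply (x y : (Fin 2 × Fin 2) × (Fin 2 × Fin 2)) :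
    triangleRho2 x y = if x = y ∧ x.1.1 = x.2.1 ∧ x.1.2 = x.2.2 then 1 / 4 else 0 := by
  obtain ⟨⟨x1, x2⟩, x3, x4⟩ := x
  obtain ⟨⟨y1, y2⟩, y3, y4⟩ := y
  simp only [triangleRho2, sigma2, Matrix.of_apply, Prod.mk.injEq]
  split_ifs <;> grind

theorem ptraceR_triangleRho1 : ptraceR triangleRho1 = maximallyMixed (Fin 2 × Fin 2) := by
  ext ⟨a1, a2⟩ ⟨b1, b2⟩
  fin_cases a1 <;> fin_cases a2 <;> fin_cases b1 <;> fin_cases b2 <;>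
    simp [ptraceR, triangleRho1_apply, maximallyMixed, Fintype.sum_prod_type] <;> norm_num

theorem ptraceL_triangleRho1 : ptraceL triangleRho1 = maximallyMixed (Fin 2 × Fin 2) := by
  ext ⟨a1, a2⟩ ⟨b1, b2⟩
  fin_cases a1 <;> fin_cases a2 <;> fin_cases b1 <;> fin_cases b2 <;>
    simp [ptraceL, triangleRho1_apply, maximallyMixed, Fintype.sum_prod_type] <;> norm_num

theorem ptraceR_triangleRho2 : ptraceR triangleRho2 = maximallyMixed (Fin 2 × Fin 2) := by
  ext ⟨a1, a2⟩ ⟨b1, b2⟩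
  fin_cases a1 <;> fin_cases a2 <;> fin_cases b1 <;> fin_cases b2 <;>
    simp [ptraceR, triangleRho2_apply, maximallyMixed, Fintype.sum_prod_type]

theorem ptraceL_triangleRho2 : ptraceL triangleRho2 = maximallyMixed (Fin 2 × Fin 2) := by
  ext ⟨a1, a2⟩ ⟨b1, b2⟩
  fin_cases a1 <;> fin_cases a2 <;> fin_cases b1 <;> fin_cases b2 <;>
    simp [ptraceL, triangleRho2_apply, maximallyMixed, Fintype.sum_prod_type]

theorem trace_kronecker_mul_triangleRho1 (X Y : Matrix (Fin 2 × Fin 2) (Fin 2 × Fin 2) ℂ) :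
    ((X ⊗ₖ Y) * triangleRho1).trace = 1 / 8 * ∑ s, ∑ t, ptraceL X s t * ptraceR Y s t := by
  simp [Matrix.trace, Matrix.mul_apply, triangleRho1_apply, ptraceL, ptraceR,
    Fintype.sum_prod_type, Fin.sum_univ_two]
  ring

theorem trace_kronecker_mul_triangleRho2 (X Y : Matrix (Fin 2 × Fin 2) (Fin 2 × Fin 2) ℂ) :
    ((X ⊗ₖ Y) * triangleRho2).trace = 1 / 4 * ∑ c, X c c * Y c c := by
  simp [Matrix.trace, Matrix.mul_apply, triangleRho2_apply, Fintype.sum_prod_type,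
    Fin.sum_univ_two]
  ring

theorem miOf_triangleRho1_le {ιA ιB : Type*} (P : PVM ιA (Fin 2 × Fin 2))
    (Q : PVM ιB (Fin 2 × Fin 2)) : miOf P Q triangleRho1 ≤ 1 := by
  have htr : triangleRho1.trace = 1 := by
    rw [← trace_ptraceR, ptraceR_triangleRho1, trace_maximallyMixed]
  have hprob (a : ιA) (b : ιB) : jointProb P Q triangleRho1 (a, b)
      = (∑ s, ∑ t, ptraceL (P.proj a) s t * ptraceR (Q.proj b) s t).re / 8 := by
    simp [jointProb, trace_kronecker_mul_triangleRho1, div_eq_inv_mul]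
  rw [← Real.logb_self_eq_one one_lt_two]
  refine miOf_le_logb P Q _ two_pos htr (fun a b => ?_) (fun a b => ?_) <;>
    have hM := (P.posSemidef_proj a).ptraceL <;> have hN := (Q.posSemidef_proj b).ptraceR
  · have := (Complex.nonneg_iff.1 (hM.sum_mul_apply_nonneg hN)).1
    rw [hprob]
    positivity
  · have := Complex.re_le_re_mul_re hM.trace_nonneg (hM.sum_mul_apply_le_trace_mul_trace hN)
    rw [hprob, ptraceR_triangleRho1, ptraceL_triangleRho1, pvmProb_maximallyMixed,
      pvmProb_maximallyMixed, ← trace_ptraceL (P.proj a), ← trace_ptraceR (Q.proj b)]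
    simp only [Fintype.card_prod, Fintype.card_fin]
    linarith

theorem miOf_triangleRho2_le {ιA ιB : Type*} (P : PVM ιA (Fin 2 × Fin 2))
    (Q : PVM ιB (Fin 2 × Fin 2)) : miOf P Q triangleRho2 ≤ 2 := by
  have htr : triangleRho2.trace = 1 := by
    rw [← trace_ptraceR, ptraceR_triangleRho2, trace_maximallyMixed]
  have hprob (a : ιA) (b : ιB) : jointProb P Q triangleRho2 (a, b)
      = (∑ c, P.proj a c c * Q.proj b c c).re / 4 := by
    simp [jointProb, trace_kronecker_mul_triangleRho2, div_eq_inv_mul]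
  rw [← logb_two_card_fin_two_prod]
  refine miOf_le_logb P Q _ (by simp) htr (fun a b => ?_) (fun a b => ?_) <;>
    have hM := P.posSemidef_proj a <;> have hN := Q.posSemidef_proj b
  · have := (Complex.nonneg_iff.1 (hM.sum_diag_mul_nonneg hN)).1
    rw [hprob]
    positivity
  · have := Complex.re_le_re_mul_re hM.trace_nonneg (hM.sum_diag_mul_le_trace_mul_trace hN)
    rw [hprob, ptraceR_triangleRho2, ptraceL_triangleRho2, pvmProb_maximallyMixed,
      pvmProb_maximallyMixed]
    simp only [Fintype.card_prod, Fintype.card_fin]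
    linarith

theorem miOf_compPVM_triangleRho1 :
    miOf (compPVM (Fin 2 × Fin 2)) (compPVM (Fin 2 × Fin 2)) triangleRho1 = 1 := by
  have hdiag : (fun x => (triangleRho1 x x).re)
      = fun x => if x.1.2 = x.2.1 then ((2 : ℝ) ^ 3)⁻¹ else 0 := by
    funext x
    simp only [triangleRho1_apply, true_and, apply_ite Complex.re, Complex.zero_re]
    norm_num
  rw [miOf_compPVM _ ptraceR_triangleRho1 ptraceL_triangleRho1, logb_two_card_fin_two_prod,
    hdiag, shannon_ite, Real.logb_inv, logb_two_two_pow]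
  norm_num [Finset.card_filter, Fintype.sum_prod_type, Fin.sum_univ_two, -Finset.sum_boole]

theorem miOf_compPVM_triangleRho2 :
    miOf (compPVM (Fin 2 × Fin 2)) (compPVM (Fin 2 × Fin 2)) triangleRho2 = 2 := by
  have hdiag : (fun x => (triangleRho2 x x).re)
      = fun x => if x.1.1 = x.2.1 ∧ x.1.2 = x.2.2 then ((2 : ℝ) ^ 2)⁻¹ else 0 := by
    funext x
    simp only [triangleRho2_apply, true_and, apply_ite Complex.re, Complex.zero_re]
    norm_num
  rw [miOf_compPVM _ ptraceR_triangleRho2 ptraceL_triangleRho2, logb_two_card_fin_two_prod,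
    hdiag, shannon_ite, Real.logb_inv, logb_two_two_pow]
  norm_num [Finset.card_filter, Fintype.sum_prod_type, Fin.sum_univ_two, -Finset.sum_boole]

/-- across the bipartition, `I_m(A;B) = 1` for the first triangle
network state and `I_m(A;B) = 2` for the second, even though in both states each side of
the bipartition has reduced-state von Neumann entropy `2`. -/
theorem triangle_networks_distinguished_by_measuredMI :
    measuredMI triangleRho1 = 1 ∧
    measuredMI triangleRho2 = 2 ∧
    vnEntropy (ptraceR triangleRho1) = 2 ∧
    vnEntropy (ptraceL triangleRho1) = 2 ∧
    vnEntropy (ptraceR triangleRho2) = 2 ∧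
    vnEntropy (ptraceL triangleRho2) = 2 := by
  simp only [ptraceR_triangleRho1, ptraceL_triangleRho1, ptraceR_triangleRho2,
    ptraceL_triangleRho2, vnEntropy_maximallyMixed, logb_two_card_fin_two_prod, and_self,
    and_true]
  exact ⟨measuredMI_eq_of_isGreatest (fun _ _ => miOf_triangleRho1_le) _ _
      miOf_compPVM_triangleRho1,
    measuredMI_eq_of_isGreatest (fun _ _ => miOf_triangleRho2_le) _ _ miOf_compPVM_triangleRho2⟩

end
end
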